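/- Duality formula for multiple zeta values: for positive integers a_1,b_1,...,a_n,b_n, the admissible index k = ({1}^{a_1−1}, b_1+1, ..., {1}^{a_n−1}, b_n+1) and its dual k† = ({1}^{b_n−1}, a_n+1, ..., {1}^{b_1−1}, a_1+1) satisfy ζ(k) = ζ(k†). -/

import Mathlib

open scoped BigOperators

namespace MZVPaper

/-- Strictly increasing tuples of positive integers of length `r`. -/
def Incr (r : ℕ) : Type := {m : Fin r → ℕ // StrictMono m ∧ ∀ i, 0 < m i}

/-- Multi-polylogarithm for a `Fin r`-indexed index. -/
noncomputable def LiF {r : ℕ} (k : Fin r → ℕ) (z : ℝ) : ℝ :=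
  ∑' m : Incr r,
    (if h : 0 < r then z ^ (m.1 ⟨r - 1, Nat.sub_lt h Nat.one_pos⟩) else 1) /
      ∏ i, (m.1 i : ℝ) ^ k i

/-- Multi-polylogarithm for a list index. -/
noncomputable def LiL (k : List ℕ) (z : ℝ) : ℝ := LiF (fun i => k.get i) z

/-- Multiple zeta value of a list index. -/
noncomputable def mzvL (k : List ℕ) : ℝ :=
  ∑' m : Incr k.length, 1 / ∏ i, (m.1 i : ℝ) ^ k.get i

/-- The word `e₁ e₀^{k₁-1} ⋯ e₁ e₀^{k_r-1}` of an index, `true = e₁`, `false = e₀`. -/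
def word (k : List ℕ) : List Bool := k.flatMap (fun ki => true :: List.replicate (ki - 1) false)

def toIndexAux (w : List Bool) : ℕ × List ℕ :=
  w.foldr (fun b p => if b then (0, (p.1 + 1) :: p.2) else (p.1 + 1, p.2)) (0, [])

/-- The index of a word in `e₁·Q⟨e₀,e₁⟩`. -/
def toIndex (w : List Bool) : List ℕ := (toIndexAux w).2

/-- Shuffle product of two words, as the list of shuffles (with multiplicity). -/
def sh : List Bool → List Bool → List (List Bool)
  | [], w => [w]
  | v, [] => [v]
  | a :: v, b :: w => ((sh v (b :: w)).map (a :: ·)) ++ ((sh (a :: v) w).map (b :: ·))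
  termination_by v w => v.length + w.length
  decreasing_by all_goals simp +arith

/-- Dual index: reverse the word and exchange `e₀ ↔ e₁`. -/
def dualIdx (k : List ℕ) : List ℕ := toIndex (((word k).reverse).map (fun b => !b))

/-- `k₊`: add 1 to the last entry. -/
def plusIdx (k : List ℕ) : List ℕ := k.dropLast ++ [(k.getLast?.getD 0) + 1]

/-- `b(l;e) = ∏ C(lᵢ+eᵢ-1, eᵢ)`. -/
noncomputable def bcoef (l : List ℕ) (e : Fin l.length → ℕ) : ℝ :=
  ∏ i, (Nat.choose (l.get i + e i - 1) (e i) : ℝ)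

/-- Componentwise sum `l + e` as a list. -/
def addIdx (l : List ℕ) (e : Fin l.length → ℕ) : List ℕ := List.ofFn fun i => l.get i + e i

/-- Arakawa–Kaneko zeta function. -/
noncomputable def xiL (k : List ℕ) (s : ℂ) : ℂ :=
  (1 / Complex.Gamma s) *
    ∫ t in Set.Ioi (0 : ℝ),
      (LiL k (1 - Real.exp (-t)) : ℂ) * (t : ℂ) ^ (s - 1) / ((Real.exp t : ℂ) - 1)

/-- Euler–Zagier type multiple zeta function `ζ(k₁,…,k_r;s)`. -/
noncomputable def ezZeta (k : List ℕ) (s : ℂ) : ℂ :=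
  ∑' m : Incr (k.length + 1),
    1 / ((∏ i : Fin k.length, (m.1 i.castSucc : ℂ) ^ k.get i) *
      (m.1 (Fin.last k.length) : ℂ) ^ s)

/-- Generalized binomial coefficient `C(s+d-1, d)`. -/
noncomputable def genBinom (s : ℂ) (d : ℕ) : ℂ :=
  (∏ i ∈ Finset.range d, (s + (d : ℂ) - 1 - (i : ℂ))) / (d.factorial : ℂ)

/-- Strictly increasing tuples with the parity condition `mᵢ ≡ i (mod 2)` (1-based). -/
def IncrOdd (r : ℕ) : Type :=
  {m : Fin r → ℕ // StrictMono m ∧ ∀ i : Fin r, m i % 2 = (i.1 + 1) % 2}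

/-- Level-2 multi-polylogarithm `A(k;z)`. -/
noncomputable def AF (k : List ℕ) (z : ℝ) : ℝ :=
  2 ^ k.length * ∑' m : IncrOdd k.length,
    (if h : 0 < k.length then z ^ (m.1 ⟨k.length - 1, Nat.sub_lt h Nat.one_pos⟩) else 1) /
      ∏ i, (m.1 i : ℝ) ^ k.get i

/-- The index `({1}^{a₁−1}, b₁+1, …, {1}^{a_n−1}, b_n+1)`. -/
def idxOf {n : ℕ} (a b : Fin n → ℕ) : List ℕ :=
  (List.ofFn fun i => List.replicate (a i - 1) 1 ++ [b i + 1]).flatten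



open ENNReal

/-- Real connector `m! n! / (m+n)!`. -/
noncomputable def cR (m n : ℕ) : ℝ := (m.factorial * n.factorial : ℝ) / (m + n).factorial

lemma cR_nonneg (m n : ℕ) : 0 ≤ cR m n := by
  unfold cR; positivity

lemma cR_tel (m b : ℕ) (hm : 0 < m) :
    cR m (b + 1) / (b + 1) = cR m b / m - cR m (b + 1) / m := by
  unfold cR
  have h1 : ((m + (b+1)).factorial : ℝ) = (m + b + 1) * (m + b).factorial := by
    rw [show m + (b+1) = (m+b) + 1 by ring, Nat.factorial_succ]; push_cast; ring
  have h2 : ((b+1).factorial : ℝ) = (b+1) * b.factorial := by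
    rw [Nat.factorial_succ]; push_cast; ring
  have hmb : ((m + b).factorial : ℝ) ≠ 0 := Nat.cast_ne_zero.2 (Nat.factorial_ne_zero _)
  have hmb1 : ((m + b : ℕ) : ℝ) + 1 ≠ 0 := by positivity
  have hb1 : ((b : ℕ) : ℝ) + 1 ≠ 0 := by positivity
  have hm' : ((m : ℕ) : ℝ) ≠ 0 := Nat.cast_ne_zero.2 hm.ne'
  rw [h1, h2]
  field_simp
  ring

/-- `gR m b` tends to 0 as `b → ∞`, for `m ≥ 1`. -/
lemma cR_div_tendsto (m : ℕ) (hm : 0 < m) :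
    Filter.Tendsto (fun b : ℕ => cR m b / m) Filter.atTop (nhds 0) := by
  apply squeeze_zero (fun b => div_nonneg (cR_nonneg m b) (Nat.cast_nonneg m))
    (g := fun b : ℕ => (m.factorial : ℝ) * (1 / (b + 1)))
  · intro b
    have hfac : ((b+1) * b.factorial : ℕ) ≤ (m + b).factorial := by
      calc ((b+1) * b.factorial : ℕ) = (b+1).factorial := (Nat.factorial_succ b).symm
        _ ≤ (m + b).factorial := Nat.factorial_le (by omega)
    have hb1 : (0:ℝ) < (b:ℝ) + 1 := by positivity
    have hbf : (0:ℝ) < (b.factorial : ℝ) := by exact_mod_cast b.factorial_pos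
    have hmf : (0:ℝ) < (m.factorial : ℝ) := by exact_mod_cast m.factorial_pos
    have hmb : (0:ℝ) < ((m+b).factorial : ℝ) := by exact_mod_cast (m+b).factorial_pos
    have hm' : (1:ℝ) ≤ (m:ℝ) := by exact_mod_cast hm
    have key : cR m b ≤ (m.factorial : ℝ) * (1 / (b + 1)) := by
      unfold cR
      rw [div_le_iff₀ hmb]
      have : ((b:ℝ)+1) * (b.factorial : ℝ) ≤ ((m+b).factorial : ℝ) := by
        exact_mod_cast hfac
      calc (m.factorial : ℝ) * (b.factorial : ℝ)
          = (m.factorial : ℝ) * (1/((b:ℝ)+1)) * (((b:ℝ)+1) * b.factorial) := by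
            field_simp
        _ ≤ (m.factorial : ℝ) * (1/((b:ℝ)+1)) * ((m+b).factorial : ℝ) := by
            apply mul_le_mul_of_nonneg_left this (by positivity)
    calc cR m b / m ≤ cR m b := div_le_self (cR_nonneg m b) hm'
      _ ≤ _ := key
  · simpa using tendsto_one_div_add_atTop_nhds_zero_nat.const_mul (m.factorial : ℝ)

lemma hasSum_key (m n : ℕ) (hm : 0 < m) :
    HasSum (fun b : ℕ => if n < b then cR m b / b else 0) (cR m n / m) := by
  set f : ℕ → ℝ := fun b => if n < b then cR m b / b else 0 with hf
  set F : ℕ → ℝ := fun j => cR m (n + j) / m with hF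
  have hterm : ∀ j : ℕ, f (j + (n+1)) = F j - F (j+1) := by
    intro j
    have h2 : j + (n+1) = (n+j)+1 := by omega
    have h3 : n + (j+1) = (n+j)+1 := by omega
    simp only [hf, hF, h2, h3, if_pos (show n < (n+j)+1 by omega)]
    have := cR_tel m (n+j) hm
    push_cast
    push_cast at this
    linarith
  have hnn : ∀ j : ℕ, 0 ≤ F j - F (j+1) := by
    intro j
    rw [← hterm j]
    simp only [hf]
    split
    · exact div_nonneg (cR_nonneg _ _) (by positivity)
    · exact le_refl 0
  have htel : HasSum (fun j : ℕ => F j - F (j+1)) (F 0) := by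
    rw [hasSum_iff_tendsto_nat_of_nonneg hnn]
    have hps : ∀ N, ∑ i ∈ Finset.range N, (F i - F (i+1)) = F 0 - F N :=
      fun N => Finset.sum_range_sub' F N
    simp only [hps]
    have hFt : Filter.Tendsto F Filter.atTop (nhds 0) := by
      have := (cR_div_tendsto m hm).comp (Filter.tendsto_add_atTop_nat n)
      simpa [hF, Function.comp_def, Nat.add_comm] using this
    simpa using (tendsto_const_nhds.sub hFt)
  have h0 : HasSum (fun j : ℕ => f (j + (n+1))) (F 0) := htel.congr_fun (fun j => hterm j)
  have := (hasSum_nat_add_iff (f := f) (n+1)).mp h0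
  have hz : ∑ i ∈ Finset.range (n+1), f i = 0 := by
    apply Finset.sum_eq_zero
    intro i hi
    simp only [hf]
    rw [if_neg]
    simp at hi; omega
  rw [hz, add_zero] at this
  simpa [hF] using this
/-- ENNReal connector. -/
noncomputable def cE (m n : ℕ) : ℝ≥0∞ := ENNReal.ofReal (cR m n)

lemma cE_zero (m : ℕ) : cE m 0 = 1 := by
  unfold cE cR
  rw [show m + 0 = m from rfl]
  simp [Nat.factorial, div_self (show ((m.factorial : ℝ)) ≠ 0 from
    Nat.cast_ne_zero.2 (Nat.factorial_ne_zero m))]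

lemma cE_comm (m n : ℕ) : cE m n = cE n m := by
  unfold cE cR; rw [mul_comm, Nat.add_comm]

lemma ofReal_div_nat (x : ℝ) (b : ℕ) (hb : 0 < b) :
    ENNReal.ofReal (x / b) = ENNReal.ofReal x * ((b : ℝ≥0∞))⁻¹ := by
  rw [ENNReal.ofReal_div_of_pos (by exact_mod_cast hb), ENNReal.ofReal_natCast,
    div_eq_mul_inv]

/-- Key transport identity in `ℝ≥0∞`. -/
lemma keyE (m n : ℕ) (hm : 0 < m) :
    (∑' b : ℕ, if n < b then cE m b * ((b : ℝ≥0∞))⁻¹ else 0)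
      = cE m n * ((m : ℝ≥0∞))⁻¹ := by
  have hs := hasSum_key m n hm
  have hnn : ∀ b : ℕ, 0 ≤ (if n < b then cR m b / b else 0) := by
    intro b; split
    · exact div_nonneg (cR_nonneg _ _) (by positivity)
    · exact le_refl 0
  have := ENNReal.ofReal_tsum_of_nonneg hnn hs.summable
  rw [hs.tsum_eq] at this
  rw [ofReal_div_nat _ m hm] at this
  rw [show (cE m n * ((m : ℝ≥0∞))⁻¹) = ∑' (b : ℕ), ENNReal.ofReal (if n < b then cR m b / b else 0) from this]
  apply tsum_congr
  intro b
  by_cases h : n < b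
  · rw [if_pos h, if_pos h, ofReal_div_nat _ b (by omega)]
    rfl
  · rw [if_neg h, if_neg h, ENNReal.ofReal_zero]
/-- Finite chain sum below a cutoff. Lists are "top-first". -/
noncomputable def DD : List ℕ → ℕ → ℝ≥0∞
  | [], _ => 1
  | k :: K, M => ∑ m ∈ Finset.Ico 1 M, ((m : ℝ≥0∞))⁻¹ ^ k * DD K m

/-- Chain sum with prescribed top value. -/
noncomputable def GG : List ℕ → ℕ → ℝ≥0∞
  | [], m => if m = 0 then 1 else 0
  | k :: K, m => if 0 < m then ((m : ℝ≥0∞))⁻¹ ^ k * DD K m else 0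

lemma GG_zero (k : ℕ) (K : List ℕ) : GG (k :: K) 0 = 0 := by simp [GG]

lemma DD_eq_sum_GG (K : List ℕ) (M : ℕ) (hM : 0 < M) :
    DD K M = ∑ m ∈ Finset.range M, GG K m := by
  cases K with
  | nil =>
      simp only [DD, GG]
      rw [Finset.sum_ite_eq' (Finset.range M) 0 (fun _ => 1)]
      simp [Finset.mem_range, hM]
  | cons k K =>
      have hsub : Finset.Ico 1 M ⊆ Finset.range M := by
        intro x hx; simp only [Finset.mem_Ico] at hx
        simp only [Finset.mem_range]; omega
      rw [← Finset.sum_subset hsub (fun x hx hx2 => by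
        have hx0 : x = 0 := by
          simp only [Finset.mem_Ico, Finset.mem_range, not_and, not_lt] at hx hx2
          omega
        rw [hx0]; exact GG_zero k K)]
      show (∑ m ∈ Finset.Ico 1 M, ((m : ℝ≥0∞))⁻¹ ^ k * DD K m) = _
      apply Finset.sum_congr rfl
      intro m hm
      have hm0 : 0 < m := by simp only [Finset.mem_Ico] at hm; omega
      simp [GG, if_pos hm0]

/-- Connected sum. -/
noncomputable def ZZ (K L : List ℕ) : ℝ≥0∞ :=
  ∑' m : ℕ, ∑' n : ℕ, cE m n * GG K m * GG L n

lemma ZZ_comm (K L : List ℕ) : ZZ K L = ZZ L K := by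
  unfold ZZ
  rw [ENNReal.tsum_comm]
  congr 1; funext n; congr 1; funext m
  rw [cE_comm]; ring

lemma ZZ_nil (K : List ℕ) : ZZ K [] = ∑' m : ℕ, GG K m := by
  unfold ZZ
  apply tsum_congr; intro m
  rw [tsum_eq_sum (s := {0}) (by intro b hb; simp at hb; simp [GG, hb])]
  simp [GG, cE_zero]

lemma inner_key (L : List ℕ) (m : ℕ) (hm : 0 < m) :
    (∑' b : ℕ, cE m b * GG (1 :: L) b)
      = (∑' n : ℕ, cE m n * GG L n) * ((m : ℝ≥0∞))⁻¹ := by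
  have step1 : (∑' b : ℕ, cE m b * GG (1 :: L) b)
      = ∑' b : ℕ, ∑' n : ℕ,
          (if n < b then GG L n * (cE m b * ((b : ℝ≥0∞))⁻¹) else 0) := by
    apply tsum_congr; intro b
    rcases Nat.eq_zero_or_pos b with hb | hb
    · subst hb
      simp [GG_zero]
    · have : GG (1 :: L) b = ((b : ℝ≥0∞))⁻¹ * DD L b := by
        simp [GG, if_pos hb, pow_one]
      rw [this, DD_eq_sum_GG L b hb]
      rw [tsum_eq_sum (s := Finset.range b)
        (by intro n hn; rw [if_neg]; simpa [Finset.mem_range] using hn)]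
      rw [Finset.mul_sum, Finset.mul_sum]
      apply Finset.sum_congr rfl
      intro n hn
      rw [if_pos (Finset.mem_range.1 hn)]
      ring
  rw [step1, ENNReal.tsum_comm]
  have step2 : ∀ n : ℕ,
      (∑' b : ℕ, if n < b then GG L n * (cE m b * ((b : ℝ≥0∞))⁻¹) else 0)
        = GG L n * (cE m n * ((m : ℝ≥0∞))⁻¹) := by
    intro n
    have : (∑' b : ℕ, if n < b then GG L n * (cE m b * ((b : ℝ≥0∞))⁻¹) else 0)
        = GG L n * ∑' b : ℕ, (if n < b then cE m b * ((b : ℝ≥0∞))⁻¹ else 0) := by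
      rw [← ENNReal.tsum_mul_left]
      apply tsum_congr; intro b
      split <;> simp
    rw [this, keyE m n hm]
  calc ∑' n : ℕ, (∑' b : ℕ, if n < b then GG L n * (cE m b * ((b : ℝ≥0∞))⁻¹) else 0)
      = ∑' n : ℕ, GG L n * (cE m n * ((m : ℝ≥0∞))⁻¹) := tsum_congr step2
    _ = ∑' n : ℕ, (cE m n * GG L n) * ((m : ℝ≥0∞))⁻¹ := by
        apply tsum_congr; intro n; ring
    _ = _ := ENNReal.tsum_mul_right

lemma GG_succ (k : ℕ) (K : List ℕ) (m : ℕ) :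
    GG ((k+1) :: K) m = ((m : ℝ≥0∞))⁻¹ * GG (k :: K) m := by
  rcases Nat.eq_zero_or_pos m with hm | hm
  · subst hm; simp [GG_zero]
  · simp only [GG, if_pos hm, pow_succ]
    ring

/-- Transport relation 1. -/
lemma T1 (k : ℕ) (K L : List ℕ) : ZZ ((k+1) :: K) L = ZZ (k :: K) (1 :: L) := by
  unfold ZZ
  apply tsum_congr; intro m
  rcases Nat.eq_zero_or_pos m with hm | hm
  · subst hm; simp [GG_zero]
  · calc (∑' n : ℕ, cE m n * GG ((k+1) :: K) m * GG L n)
        = ∑' n : ℕ, GG (k :: K) m * ((cE m n * GG L n) * ((m : ℝ≥0∞))⁻¹) := by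
          apply tsum_congr; intro n
          rw [GG_succ]; ring
      _ = GG (k :: K) m * ((∑' n : ℕ, cE m n * GG L n) * ((m : ℝ≥0∞))⁻¹) := by
          rw [ENNReal.tsum_mul_left, ENNReal.tsum_mul_right]
      _ = GG (k :: K) m * (∑' b : ℕ, cE m b * GG (1 :: L) b) := by
          rw [inner_key L m hm]
      _ = ∑' n : ℕ, cE m n * GG (k :: K) m * GG (1 :: L) n := by
          rw [← ENNReal.tsum_mul_left]
          apply tsum_congr; intro n; ring

/-- Transport relation 2. -/
lemma T2 (l : ℕ) (K L : List ℕ) : ZZ (1 :: K) (l :: L) = ZZ K ((l+1) :: L) := by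
  rw [ZZ_comm, ← T1 l L K, ZZ_comm]
noncomputable def wprod (r : ℕ) (ke g : Fin r → ℕ) : ℝ≥0∞ :=
  ∏ i, ((g i : ℝ≥0∞))⁻¹ ^ ke i

noncomputable def WS (r : ℕ) (ke : Fin r → ℕ) (M : ℕ) : ℝ≥0∞ :=
  ∑' g : Fin r → ℕ,
    if StrictMono g ∧ (∀ i, 0 < g i) ∧ (∀ i, g i < M) then wprod r ke g else 0

noncomputable def ZS (r : ℕ) (ke : Fin r → ℕ) : ℝ≥0∞ :=
  ∑' g : Fin r → ℕ, if StrictMono g ∧ (∀ i, 0 < g i) then wprod r ke g else 0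

lemma strictMono_snoc_iff {r : ℕ} (g : Fin r → ℕ) (t : ℕ) :
    StrictMono (Fin.snoc g t : Fin (r+1) → ℕ) ↔ StrictMono g ∧ ∀ i, g i < t := by
  constructor
  · intro h
    refine ⟨fun i j hij => ?_, fun i => ?_⟩
    · have := h (Fin.castSucc_lt_castSucc_iff.2 hij)
      simpa [Fin.snoc_castSucc] using this
    · have := h (Fin.castSucc_lt_last i)
      simpa [Fin.snoc_castSucc, Fin.snoc_last] using this
  · rintro ⟨hg, hlt⟩ i j hij
    rcases Nat.lt_or_ge j.1 (r) with hj | hj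
    · have hi : i.1 < r := lt_trans hij hj
      have hi' : i = Fin.castSucc ⟨i.1, hi⟩ := Fin.ext rfl
      have hj' : j = Fin.castSucc ⟨j.1, hj⟩ := Fin.ext rfl
      rw [hi', hj', Fin.snoc_castSucc, Fin.snoc_castSucc]
      exact hg hij
    · have hj2 := j.isLt
      have hj' : j = Fin.last r := Fin.ext (by simp only [Fin.val_last]; omega)
      have hi : i.1 < r := by
        have h2 := hij
        rw [hj'] at h2
        simpa [Fin.lt_def] using h2
      have hi' : i = Fin.castSucc ⟨i.1, hi⟩ := Fin.ext rfl
      rw [hi', hj', Fin.snoc_castSucc, Fin.snoc_last]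
      exact hlt _

lemma pos_snoc_iff {r : ℕ} (g : Fin r → ℕ) (t : ℕ) :
    (∀ i, 0 < (Fin.snoc g t : Fin (r+1) → ℕ) i) ↔ (∀ i, 0 < g i) ∧ 0 < t := by
  constructor
  · intro h
    refine ⟨fun i => ?_, ?_⟩
    · have := h i.castSucc; simpa [Fin.snoc_castSucc] using this
    · have := h (Fin.last r); simpa [Fin.snoc_last] using this
  · rintro ⟨h1, h2⟩ i
    refine Fin.lastCases ?_ ?_ i
    · simpa [Fin.snoc_last] using h2
    · intro j; simpa [Fin.snoc_castSucc] using h1 j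

lemma wprod_snoc (r : ℕ) (ke : Fin (r+1) → ℕ) (g : Fin r → ℕ) (t : ℕ) :
    wprod (r+1) ke (Fin.snoc g t) =
      ((t : ℝ≥0∞))⁻¹ ^ ke (Fin.last r) * wprod r (ke ∘ Fin.castSucc) g := by
  unfold wprod
  rw [Fin.prod_univ_castSucc]
  simp only [Fin.snoc_castSucc, Fin.snoc_last, Function.comp]
  rw [mul_comm]

lemma tsum_snoc (r : ℕ) (A : (Fin (r+1) → ℕ) → ℝ≥0∞) :
    (∑' g : Fin (r+1) → ℕ, A g) = ∑' t : ℕ, ∑' g : Fin r → ℕ, A (Fin.snoc g t) := by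
  have e := Fin.insertNthEquiv (fun _ : Fin (r+1) => ℕ) (Fin.last r)
  rw [← Equiv.tsum_eq (Fin.insertNthEquiv (fun _ : Fin (r+1) => ℕ) (Fin.last r)) A]
  rw [← ENNReal.tsum_prod]
  apply tsum_congr
  intro p
  congr 1
  show (Fin.insertNthEquiv (fun _ : Fin (r+1) => ℕ) (Fin.last r)) ⟨p.1, p.2⟩ = Fin.snoc p.2 p.1
  simp [Fin.insertNthEquiv]

lemma ZS_split (r : ℕ) (ke : Fin (r+1) → ℕ) :
    ZS (r+1) ke = ∑' t : ℕ,
      if 0 < t then ((t : ℝ≥0∞))⁻¹ ^ ke (Fin.last r) * WS r (ke ∘ Fin.castSucc) t else 0 := by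
  unfold ZS
  rw [tsum_snoc]
  apply tsum_congr
  intro t
  by_cases ht : 0 < t
  · rw [if_pos ht]
    unfold WS
    rw [← ENNReal.tsum_mul_left]
    apply tsum_congr
    intro g
    by_cases hg : StrictMono g ∧ (∀ i, 0 < g i) ∧ (∀ i, g i < t)
    · rw [if_pos, if_pos hg, wprod_snoc]
      exact ⟨(strictMono_snoc_iff g t).2 ⟨hg.1, hg.2.2⟩,
        (pos_snoc_iff g t).2 ⟨hg.2.1, ht⟩⟩
    · rw [if_neg, if_neg hg, mul_zero]
      intro hc
      exact hg ⟨((strictMono_snoc_iff g t).1 hc.1).1,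
        ((pos_snoc_iff g t).1 hc.2).1, ((strictMono_snoc_iff g t).1 hc.1).2⟩
  · have ht0 : t = 0 := by omega
    subst ht0
    simp only [if_neg (lt_irrefl 0)]
    apply (Summable.tsum_eq_zero_iff ENNReal.summable).2
    intro g
    rw [if_neg]
    intro hc
    have := hc.2 (Fin.last r)
    rw [Fin.snoc_last] at this
    omega

lemma WS_split (r : ℕ) (ke : Fin (r+1) → ℕ) (M : ℕ) :
    WS (r+1) ke M = ∑ t ∈ Finset.Ico 1 M,
      ((t : ℝ≥0∞))⁻¹ ^ ke (Fin.last r) * WS r (ke ∘ Fin.castSucc) t := by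
  have step1 : WS (r+1) ke M = ∑' t : ℕ,
      (if 0 < t ∧ t < M then
        ((t : ℝ≥0∞))⁻¹ ^ ke (Fin.last r) * WS r (ke ∘ Fin.castSucc) t else 0) := by
    unfold WS
    rw [tsum_snoc]
    apply tsum_congr
    intro t
    by_cases ht : 0 < t ∧ t < M
    · rw [if_pos ht, ← ENNReal.tsum_mul_left]
      apply tsum_congr
      intro g
      by_cases hg : StrictMono g ∧ (∀ i, 0 < g i) ∧ (∀ i, g i < t)
      · rw [if_pos, if_pos hg, wprod_snoc]
        refine ⟨(strictMono_snoc_iff g t).2 ⟨hg.1, hg.2.2⟩,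
          (pos_snoc_iff g t).2 ⟨hg.2.1, ht.1⟩, ?_⟩
        intro i
        refine Fin.lastCases ?_ ?_ i
        · simpa [Fin.snoc_last] using ht.2
        · intro j
          have := hg.2.2 j
          simp only [Fin.snoc_castSucc]
          omega
      · rw [if_neg, if_neg hg, mul_zero]
        intro hc
        refine hg ⟨((strictMono_snoc_iff g t).1 hc.1).1,
          ((pos_snoc_iff g t).1 hc.2.1).1, ((strictMono_snoc_iff g t).1 hc.1).2⟩
    · rw [if_neg ht]
      apply (Summable.tsum_eq_zero_iff ENNReal.summable).2
      intro g
      rw [if_neg]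
      intro hc
      have h1 := (pos_snoc_iff g t).1 hc.2.1
      have h2 := hc.2.2 (Fin.last r)
      rw [Fin.snoc_last] at h2
      exact ht ⟨h1.2, h2⟩
  rw [step1]
  rw [tsum_eq_sum (s := Finset.Ico 1 M)
    (by intro t ht; rw [if_neg]; simp only [Finset.mem_Ico] at ht; omega)]
  apply Finset.sum_congr rfl
  intro t ht
  simp only [Finset.mem_Ico] at ht
  rw [if_pos (by omega)]

lemma strictMono_fin_zero (g : Fin 0 → ℕ) : StrictMono g := fun a => a.elim0

lemma tsum_fin_zero (A : (Fin 0 → ℕ) → ℝ≥0∞) : (∑' g : Fin 0 → ℕ, A g) = A (fun i => i.elim0) := by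
  rw [tsum_eq_single (fun i => i.elim0)]
  intro b' hb'
  exact absurd (funext fun i => i.elim0) hb'

lemma bridgeL : ∀ (k : List ℕ) {r : ℕ} (h : k.length = r) (ke : Fin r → ℕ),
    (∀ i : Fin r, ke i = k.get (Fin.cast h.symm i)) → ∀ M : ℕ, 0 < M →
    WS r ke M = DD k.reverse M := by
  intro k
  induction k using List.reverseRecOn with
  | nil =>
      intro r h ke hke M hM
      subst h
      show WS 0 ke M = 1
      unfold WS
      rw [tsum_fin_zero]
      rw [if_pos ⟨strictMono_fin_zero _, fun i => i.elim0, fun i => i.elim0⟩]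
      unfold wprod
      simp
  | append_singleton k' κ ih =>
      intro r h ke hke M hM
      have hr : r = k'.length + 1 := by simp at h; omega
      subst hr
      have hlen : k'.length < (k' ++ [κ]).length := by simp
      have hlast : ke (Fin.last k'.length) = κ := by
        rw [hke (Fin.last k'.length)]
        show (k' ++ [κ]).get (Fin.cast h.symm (Fin.last k'.length)) = κ
        rw [List.get_eq_getElem]
        exact List.getElem_concat_length rfl _
      rw [WS_split, hlast]
      have hrev : (k' ++ [κ]).reverse = κ :: k'.reverse := by simp
      rw [hrev]
      show _ = ∑ m ∈ Finset.Ico 1 M, ((m : ℝ≥0∞))⁻¹ ^ κ * DD k'.reverse m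
      apply Finset.sum_congr rfl
      intro t ht
      simp only [Finset.mem_Ico] at ht
      congr 1
      apply ih rfl
      · intro i
        show ke i.castSucc = k'.get (Fin.cast rfl i)
        rw [hke i.castSucc]
        rw [List.get_eq_getElem, List.get_eq_getElem]
        exact List.getElem_append_left i.2
      · omega

lemma ZS_eq_tsum_GG : ∀ (k : List ℕ) {r : ℕ} (h : k.length = r) (ke : Fin r → ℕ),
    (∀ i : Fin r, ke i = k.get (Fin.cast h.symm i)) →
    ZS r ke = ∑' M : ℕ, GG k.reverse M := by
  intro k
  induction k using List.reverseRecOn with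
  | nil =>
      intro r h ke hke
      subst h
      show ZS 0 ke = ∑' M : ℕ, GG [] M
      unfold ZS
      rw [tsum_fin_zero, if_pos ⟨strictMono_fin_zero _, fun i => i.elim0⟩]
      show wprod 0 ke _ = _
      have : (∑' M : ℕ, GG [] M) = 1 := by
        show (∑' M : ℕ, if M = 0 then (1:ℝ≥0∞) else 0) = 1
        exact tsum_ite_eq 0 1
      rw [this]
      unfold wprod; simp
  | append_singleton k' κ ih =>
      intro r h ke hke
      have hr : r = k'.length + 1 := by simp at h; omega
      subst hr
      have hlast : ke (Fin.last k'.length) = κ := by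
        rw [hke (Fin.last k'.length)]
        show (k' ++ [κ]).get (Fin.cast h.symm (Fin.last k'.length)) = κ
        rw [List.get_eq_getElem]
        exact List.getElem_concat_length rfl _
      rw [ZS_split, hlast]
      have hrev : (k' ++ [κ]).reverse = κ :: k'.reverse := by simp
      rw [hrev]
      apply tsum_congr
      intro t
      show _ = if 0 < t then ((t : ℝ≥0∞))⁻¹ ^ κ * DD k'.reverse t else 0
      by_cases ht : 0 < t
      · rw [if_pos ht, if_pos ht]
        congr 1
        apply bridgeL k' rfl
        · intro i
          show ke i.castSucc = k'.get (Fin.cast rfl i)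
          rw [hke i.castSucc]
          rw [List.get_eq_getElem, List.get_eq_getElem]
          exact List.getElem_append_left i.2
        · exact ht
      · rw [if_neg ht, if_neg ht]
lemma ZS_eq_subtype (r : ℕ) (ke : Fin r → ℕ) :
    ZS r ke = ∑' m : Incr r, wprod r ke m.1 := by
  unfold ZS
  have := tsum_subtype {g : Fin r → ℕ | StrictMono g ∧ ∀ i, 0 < g i} (wprod r ke)
  rw [show (∑' m : Incr r, wprod r ke m.1)
      = ∑' x : {g : Fin r → ℕ | StrictMono g ∧ ∀ i, 0 < g i}, wprod r ke x.1 from rfl]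
  rw [this]
  apply tsum_congr
  intro g
  by_cases h : StrictMono g ∧ ∀ i, 0 < g i
  · rw [if_pos h, Set.indicator_of_mem (show g ∈ {g : Fin r → ℕ | StrictMono g ∧ ∀ i, 0 < g i} from h)]
  · rw [if_neg h, Set.indicator_of_notMem (show g ∉ {g : Fin r → ℕ | StrictMono g ∧ ∀ i, 0 < g i} from h)]

lemma wprod_ne_top (r : ℕ) (ke : Fin r → ℕ) (m : Incr r) :
    wprod r ke m.1 ≠ ⊤ := by
  unfold wprod
  rw [← lt_top_iff_ne_top]
  apply ENNReal.prod_lt_top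
  intro i _
  apply ENNReal.pow_lt_top
  rw [ENNReal.inv_lt_top]
  exact_mod_cast m.2.2 i

lemma wprod_toReal (r : ℕ) (ke : Fin r → ℕ) (g : Fin r → ℕ) :
    (wprod r ke g).toReal = 1 / ∏ i, (g i : ℝ) ^ ke i := by
  unfold wprod
  rw [ENNReal.toReal_prod]
  rw [one_div, ← Finset.prod_inv_distrib]
  apply Finset.prod_congr rfl
  intro i _
  rw [ENNReal.toReal_pow, ENNReal.toReal_inv, inv_pow]
  norm_num

lemma mzvL_eq_toReal_ZS (k : List ℕ) :
    mzvL k = (ZS k.length (fun i => k.get i)).toReal := by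
  rw [ZS_eq_subtype]
  rw [ENNReal.tsum_toReal_eq (fun m => wprod_ne_top _ _ m)]
  unfold mzvL
  apply tsum_congr
  intro m
  rw [wprod_toReal]
def fromB (q : List (ℕ × ℕ)) : List ℕ :=
  q.flatMap (fun p => (p.2+1) :: List.replicate (p.1-1) 1)
def dualB (q : List (ℕ × ℕ)) : List ℕ :=
  q.reverse.flatMap (fun p => (p.1+1) :: List.replicate (p.2-1) 1)

lemma B1 (b : ℕ) : ∀ (R L : List ℕ),
    ZZ ((b+1) :: R) L = ZZ (1 :: R) (List.replicate b 1 ++ L) := by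
  induction b with
  | zero => intro R L; simp
  | succ b ih =>
      intro R L
      rw [T1 (b+1) R L, ih R (1 :: L)]
      congr 1
      rw [List.replicate_succ']
      simp

lemma B2 : ∀ (a : ℕ) (K L : List ℕ) (l : ℕ),
    ZZ (List.replicate a 1 ++ K) (l :: L) = ZZ K ((l+a) :: L) := by
  intro a
  induction a with
  | zero => intro K L l; simp
  | succ a ih =>
      intro K L l
      have h : List.replicate (a+1) 1 ++ K = 1 :: (List.replicate a 1 ++ K) := by
        simp [List.replicate_succ]
      rw [h, T2 l _ L, ih K L (l+1)]
      congr 2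
      omega

lemma blockT (aa bb : ℕ) (ha : 0 < aa) (hb : 0 < bb) (K L : List ℕ) :
    ZZ ((bb+1) :: (List.replicate (aa-1) 1 ++ K)) L
      = ZZ K ((aa+1) :: (List.replicate (bb-1) 1 ++ L)) := by
  rw [B1 bb _ L]
  have h1 : (1 : ℕ) :: (List.replicate (aa-1) 1 ++ K) = List.replicate aa 1 ++ K := by
    cases aa with
    | zero => omega
    | succ a => simp [List.replicate_succ]
  have h2 : List.replicate bb 1 ++ L = 1 :: (List.replicate (bb-1) 1 ++ L) := by
    cases bb with
    | zero => omega
    | succ b => simp [List.replicate_succ]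
  rw [h1, h2, B2 aa K _ 1]
  rw [Nat.add_comm]

lemma main_ind : ∀ (q : List (ℕ × ℕ)), (∀ p ∈ q, 0 < p.1 ∧ 0 < p.2) → ∀ L,
    ZZ (fromB q) L = ZZ [] (dualB q ++ L) := by
  intro q
  induction q with
  | nil => intro _ L; simp [fromB, dualB]
  | cons p q ih =>
      intro hq L
      have hfrom : fromB (p :: q) = (p.2+1) :: (List.replicate (p.1-1) 1 ++ fromB q) := by
        simp [fromB]
      have hp := hq p (List.mem_cons_self (a := p) (l := q))
      rw [hfrom, blockT p.1 p.2 hp.1 hp.2 (fromB q) L,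
        ih (fun x hx => hq x (List.mem_cons_of_mem p hx)) _]
      congr 1
      show dualB q ++ ((p.1+1) :: (List.replicate (p.2-1) 1 ++ L)) = dualB (p :: q) ++ L
      simp [dualB, List.flatMap_append]

lemma tsum_GG_dual (q : List (ℕ × ℕ)) (hq : ∀ p ∈ q, 0 < p.1 ∧ 0 < p.2) :
    (∑' M : ℕ, GG (fromB q) M) = ∑' M : ℕ, GG (dualB q) M := by
  rw [← ZZ_nil, ← ZZ_nil]
  rw [show ZZ (fromB q) [] = ZZ [] (dualB q ++ []) from by
    simpa using main_ind q hq []]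
  rw [List.append_nil, ZZ_comm]

lemma reverse_ofFn {α : Type*} (n : ℕ) (f : Fin n → α) :
    (List.ofFn f).reverse = List.ofFn (fun i => f (Fin.rev i)) := by
  apply List.ext_getElem
  · simp
  · intro i h1 h2
    rw [List.getElem_reverse, List.getElem_ofFn, List.getElem_ofFn]
    congr 1
    apply Fin.ext
    simp only [Fin.rev]
    simp at h1 h2 ⊢
    omega

lemma idx_rev {n : ℕ} (a b : Fin n → ℕ) :
    (idxOf a b).reverse
      = fromB (List.ofFn fun i : Fin n => (a (Fin.rev i), b (Fin.rev i))) := by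
  unfold idxOf fromB
  rw [List.reverse_flatten, List.map_ofFn, reverse_ofFn, List.flatMap_def, List.map_ofFn]
  refine congrArg List.flatten (congrArg List.ofFn (funext fun i => ?_))
  simp [List.reverse_append]

lemma dual_rev {n : ℕ} (a b : Fin n → ℕ) :
    dualB (List.ofFn fun i : Fin n => (a (Fin.rev i), b (Fin.rev i)))
      = (idxOf (b ∘ Fin.rev) (a ∘ Fin.rev)).reverse := by
  rw [idx_rev (b ∘ Fin.rev) (a ∘ Fin.rev)]
  unfold dualB fromB
  rw [reverse_ofFn, List.flatMap_def, List.map_ofFn, List.flatMap_def, List.map_ofFn]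
  refine congrArg List.flatten (congrArg List.ofFn (funext fun i => ?_))
  simp [Function.comp]

/-- Duality formula for multiple zeta values: `ζ(k) = ζ(k†)`. -/
theorem stmt8 (n : ℕ) (a b : Fin n → ℕ) (ha : ∀ i, 0 < a i) (hb : ∀ i, 0 < b i) :
    mzvL (idxOf a b) = mzvL (idxOf (b ∘ Fin.rev) (a ∘ Fin.rev)) := by
  rw [mzvL_eq_toReal_ZS (idxOf a b), mzvL_eq_toReal_ZS (idxOf (b ∘ Fin.rev) (a ∘ Fin.rev))]
  congr 1
  rw [ZS_eq_tsum_GG (idxOf a b) rfl (fun i => (idxOf a b).get i) (fun i => rfl),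
      ZS_eq_tsum_GG (idxOf (b ∘ Fin.rev) (a ∘ Fin.rev)) rfl
        (fun i => (idxOf (b ∘ Fin.rev) (a ∘ Fin.rev)).get i) (fun i => rfl)]
  rw [idx_rev a b, ← dual_rev a b]
  refine tsum_GG_dual _ ?_
  intro p hp
  rw [List.mem_ofFn] at hp
  obtain ⟨i, hi⟩ := hp
  rw [← hi]
  exact ⟨ha _, hb _⟩

end MZVPaper
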